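/- arXiv:1904.07738 — 5 statements merged into one kernel-verified Lean document; each statement's English description precedes it below -/
import Mathlib

section
/- Let λ > 0 be a real number and set δ = √(λ/2). Then the function u : ℝ × ℝ → ℝ defined by u(x,t) = -(1/2)(1 + tanh((δ/2)·x + (3λ/4)·t)) satisfies the Chaffee–Infante equation ∂u/∂t - ∂²u/∂x² + λ(u³ - u) = 0 at every point (x,t) ∈ ℝ². -/
/-!
The profile `φ z = -(1 + tanh z) / 2` satisfies the logistic equation `φ' = 2 φ (1 + φ)`, hence
`φ'' = 4 φ (1 + φ) (1 + 2 φ)`. For the travelling wave `u x t = φ (a x + b t)` the left-hand side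
of the Chaffee–Infante equation becomes `φ (1 + φ) (2 b - 4 a² (1 + 2 φ) + λ (φ - 1))`, which
vanishes identically when `a² = λ / 8` and `b = 3 λ / 4`.
-/

open Real

section AffineReparametrization

variable {𝕜 : Type*} [NontriviallyNormedField 𝕜] (f : 𝕜 → 𝕜) (a c : 𝕜)

theorem deriv_comp_mul_add (t : 𝕜) :
    deriv (fun s => f (a * s + c)) t = a * deriv f (a * t + c) := by
  simpa only [deriv_comp_add_const, smul_eq_mul] using deriv_comp_mul_left a (fun y => f (y + c)) t

theorem iteratedDeriv_comp_mul_add (n : ℕ) :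
    iteratedDeriv n (fun s => f (a * s + c)) = fun t => a ^ n * iteratedDeriv n f (a * t + c) := by
  induction n with
  | zero => simp
  | succ n ih =>
    funext t
    simp only [iteratedDeriv_succ, ih, deriv_const_mul_field', deriv_comp_mul_add]
    ring

end AffineReparametrization

theorem Real.hasDerivAt_tanh (x : ℝ) : HasDerivAt tanh (1 - tanh x ^ 2) x := by
  have h := (hasDerivAt_sinh x).div (hasDerivAt_cosh x) (cosh_pos x).ne'
  rw [show sinh / cosh = tanh by funext y; simp [tanh_eq_sinh_div_cosh]] at h
  refine h.congr_deriv ?_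
  rw [tanh_eq_sinh_div_cosh]
  field_simp

noncomputable def kink (z : ℝ) : ℝ := -(1 / 2) * (1 + tanh z)

theorem hasDerivAt_kink (z : ℝ) : HasDerivAt kink (2 * kink z * (1 + kink z)) z := by
  refine (((hasDerivAt_tanh z).const_add 1).const_mul (-(1 / 2) : ℝ)).congr_deriv ?_
  rw [kink]
  ring

theorem deriv_kink : deriv kink = fun z => 2 * kink z * (1 + kink z) :=
  funext fun z => (hasDerivAt_kink z).deriv

theorem iteratedDeriv_two_kink (z : ℝ) :
    iteratedDeriv 2 kink z = 4 * kink z * (1 + kink z) * (1 + 2 * kink z) := by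
  rw [iteratedDeriv_succ, iteratedDeriv_one, deriv_kink]
  have hk := hasDerivAt_kink z
  rw [((hk.const_mul 2).fun_mul (hk.const_add 1)).deriv]
  ring

/-- The known soliton solution `u(x,t) = -(1/2)(1 + tanh((δ/2)x + (3λ/4)t))`,
with `δ = √(λ/2)`, satisfies the Chaffee–Infante equation
`∂u/∂t - ∂²u/∂x² + λ(u³ - u) = 0` at every point, for `λ > 0`. -/
theorem soliton_solves_chaffee_infante (lam : ℝ) (hlam : 0 < lam)
    (u : ℝ → ℝ → ℝ)
    (hu : ∀ x t : ℝ,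
      u x t = -(1/2) * (1 + Real.tanh ((Real.sqrt (lam/2) / 2) * x + (3*lam/4) * t))) :
    ∀ x t : ℝ,
      deriv (fun s => u x s) t - iteratedDeriv 2 (fun y => u y t) x
        + lam * ((u x t)^3 - u x t) = 0 := by
  set a := √(lam / 2) / 2
  set b := 3 * lam / 4
  have ha : a ^ 2 = lam / 8 := by
    rw [div_pow, sq_sqrt (by positivity)]
    ring
  obtain rfl : u = fun x t => kink (a * x + b * t) := funext₂ hu
  intro x t
  have hdt : deriv (fun s => kink (a * x + b * s)) t = b * deriv kink (a * x + b * t) := by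
    simpa only [add_comm (a * x)] using deriv_comp_mul_add kink b (a * x) t
  have hdxx : iteratedDeriv 2 (fun y => kink (a * y + b * t)) x
      = a ^ 2 * iteratedDeriv 2 kink (a * x + b * t) :=
    congrFun (iteratedDeriv_comp_mul_add kink a (b * t) 2) x
  rw [hdt, hdxx, deriv_kink, iteratedDeriv_two_kink, ha]
  ring
end

section
/- Let λ ≠ 0 be a real number, let c : ℕ → ℝ satisfy (n+1)·(n+2)·c(n+2) = λ·( Σ_{k=0}^{n} Σ_{j=0}^{k} c(j)·c(k-j)·c(n-k) - c(n) ) for all n ≥ 0, and suppose the power series Σ_{n≥0} c(n)·xⁿ has radius of convergence R > 0 with sum f(x) for |x| < R. Then the function u(x,t) = f(x) satisfies the Chaffee–Infante equation ∂u/∂t - ∂²u/∂x² + λ(u³ - u) = 0 at every point (x,t) with |x| < R. -/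
/-!
On `|x| < R` the series may be differentiated termwise twice, so `f'' = ∑ (n+1)(n+2) c(n+2) xⁿ`,
and two Cauchy products give `f³ = ∑ (∑_k ∑_j c j c(k-j) c(n-k)) xⁿ`. The recurrence says exactly
that the coefficients of `f''` and of `λ (f³ - f)` agree; `u` does not depend on `t`, so `∂u/∂t = 0`.
-/

open Filter Finset Metric Topology

def derivCoeff (c : ℕ → ℝ) (n : ℕ) : ℝ := ((n : ℝ) + 1) * c (n + 1)

section PowerSeries

variable {c : ℕ → ℝ} {R : ℝ}

lemma summable_abs_mul_pow (hc : ∀ x : ℝ, |x| < R → Summable fun n => c n * x ^ n)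
    {r : ℝ} (hr : 0 ≤ r) (hrR : r < R) : Summable fun n => |c n| * r ^ n := by
  obtain ⟨r', hrr', hr'R⟩ := exists_between hrR
  lift r' to NNReal using hr.trans hrr'.le
  lift r to NNReal using hr
  let p := FormalMultilinearSeries.ofScalars ℝ c
  have hnorm (s : ℝ) (n : ℕ) : ‖p n‖ * s ^ n = |c n| * s ^ n := by
    rw [FormalMultilinearSeries.ofScalars_norm, Real.norm_eq_abs]
  have hradius : (r' : ENNReal) ≤ p.radius := by
    refine p.le_radius_of_tendsto (l := 0) ?_
    simp only [hnorm]
    simpa [abs_mul, abs_pow] using (hc r' (by rwa [NNReal.abs_eq])).tendsto_atTop_zero.abs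
  have := p.summable_norm_mul_pow (lt_of_lt_of_le (by exact_mod_cast hrr') hradius)
  simpa only [hnorm] using this

lemma summable_derivCoeff_mul_pow (hc : ∀ x : ℝ, |x| < R → Summable fun n => c n * x ^ n)
    {x : ℝ} (hx : |x| < R) : Summable fun n => derivCoeff c n * x ^ n := by
  obtain ⟨r, hxr, hrR⟩ := exists_between hx
  have hr : 0 < r := (abs_nonneg x).trans_lt hxr
  set q := |x| / r
  have hq0 : 0 ≤ q := by positivity
  have hq1 : q < 1 := (div_lt_one hr).2 hxr
  obtain ⟨B, hB⟩ : BddAbove (Set.range fun n : ℕ => ((n : ℝ) + 1) * q ^ n) := by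
    have := (tendsto_self_mul_const_pow_of_lt_one hq0 hq1).add
      (tendsto_pow_atTop_nhds_zero_of_lt_one hq0 hq1)
    simpa only [add_mul, one_mul] using this.bddAbove_range
  have hc' := (summable_nat_add_iff 1).2 (summable_abs_mul_pow hc hr.le hrR)
  refine Summable.of_norm_bounded (hc'.mul_left (B / r)) fun n => ?_
  calc ‖derivCoeff c n * x ^ n‖
      = |c (n + 1)| * r ^ (n + 1) * (((n : ℝ) + 1) * q ^ n) / r := by
        simp only [derivCoeff, q, Real.norm_eq_abs, abs_mul, abs_pow, div_pow]
        rw [abs_of_nonneg (by positivity : (0 : ℝ) ≤ n + 1)]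
        field_simp
        ring
    _ ≤ |c (n + 1)| * r ^ (n + 1) * B / r := by
        gcongr
        exact hB ⟨n, rfl⟩
    _ = B / r * (|c (n + 1)| * r ^ (n + 1)) := by ring

theorem hasDerivAt_tsum_mul_pow (hc : ∀ x : ℝ, |x| < R → Summable fun n => c n * x ^ n)
    {x : ℝ} (hx : |x| < R) :
    HasDerivAt (fun z => ∑' n, c n * z ^ n) (∑' n, derivCoeff c n * x ^ n) x := by
  obtain ⟨r, hxr, hrR⟩ := exists_between hx
  have hr : 0 < r := (abs_nonneg x).trans_lt hxr
  have hdom : Summable fun n => |c n| * (n * r ^ (n - 1)) := by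
    rw [← summable_nat_add_iff 1]
    refine (summable_abs_mul_pow (fun _ => summable_derivCoeff_mul_pow hc) hr.le hrR).congr
      fun n => ?_
    simp only [derivCoeff, abs_mul, Nat.add_sub_cancel, Nat.cast_succ]
    rw [abs_of_nonneg (by positivity : (0 : ℝ) ≤ n + 1)]
    ring
  have hbound (n : ℕ) (y : ℝ) (hy : y ∈ ball 0 r) :
      ‖c n * (n * y ^ (n - 1))‖ ≤ |c n| * (n * r ^ (n - 1)) := by
    rw [mem_ball_zero_iff, Real.norm_eq_abs] at hy
    rw [Real.norm_eq_abs, abs_mul, abs_mul, abs_pow, Nat.abs_cast]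
    gcongr
  have hx0 : |(0 : ℝ)| < R := by simpa using (abs_nonneg x).trans_lt hx
  have hxr' : x ∈ ball 0 r := by rwa [mem_ball_zero_iff, Real.norm_eq_abs]
  have htermwise := hasDerivAt_tsum_of_isPreconnected hdom isOpen_ball
    (convex_ball (0 : ℝ) r).isPreconnected (fun n y _ => (hasDerivAt_pow n y).const_mul (c n))
    hbound (mem_ball_self hr) (hc 0 hx0) hxr'
  refine htermwise.congr_deriv ?_
  rw [(Summable.of_norm_bounded hdom fun n => hbound n x hxr').tsum_eq_zero_add]
  simp only [derivCoeff, CharP.cast_eq_zero, zero_mul, mul_zero, zero_add, Nat.cast_succ,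
    Nat.add_sub_cancel]
  exact tsum_congr fun n => by ring

lemma derivCoeff_derivCoeff (c : ℕ → ℝ) (n : ℕ) :
    derivCoeff (derivCoeff c) n = ((n : ℝ) + 1) * ((n : ℝ) + 2) * c (n + 2) := by
  simp only [derivCoeff, Nat.cast_succ]
  ring

theorem iteratedDeriv_two_eq_tsum {f : ℝ → ℝ}
    (hf : ∀ x : ℝ, |x| < R → HasSum (fun n => c n * x ^ n) (f x)) {x : ℝ} (hx : |x| < R) :
    iteratedDeriv 2 f x = ∑' n, derivCoeff (derivCoeff c) n * x ^ n := by
  have hc (z : ℝ) (hz : |z| < R) := (hf z hz).summable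
  have hnhds {z : ℝ} (hz : |z| < R) : ∀ᶠ w in 𝓝 z, |w| < R :=
    (isOpen_lt continuous_abs continuous_const).mem_nhds (s := {w | |w| < R}) hz
  have hderiv {z : ℝ} (hz : |z| < R) : deriv f z = ∑' n, derivCoeff c n * z ^ n :=
    ((hasDerivAt_tsum_mul_pow hc hz).congr_of_eventuallyEq
      ((hnhds hz).mono fun w hw => (hf w hw).tsum_eq.symm)).deriv
  rw [iteratedDeriv_succ, iteratedDeriv_one]
  exact ((hasDerivAt_tsum_mul_pow (fun _ => summable_derivCoeff_mul_pow hc) hx)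
    |>.congr_of_eventuallyEq ((hnhds hx).mono fun w hw => hderiv hw)).deriv

end PowerSeries

lemma sum_range_mul_pow_mul_mul_pow {A : Type*} [CommSemiring A] (a b : ℕ → A) (x : A)
    (n : ℕ) :
    ∑ k ∈ range (n + 1), a k * x ^ k * (b (n - k) * x ^ (n - k))
      = (∑ k ∈ range (n + 1), a k * b (n - k)) * x ^ n := by
  rw [sum_mul]
  refine sum_congr rfl fun k hk => ?_
  rw [← pow_mul_pow_sub x (Nat.le_of_lt_succ (mem_range.1 hk))]
  ring

theorem hasSum_cube_mul_pow {A : Type*} [NormedCommRing A] [CompleteSpace A] {c : ℕ → A} {x s : A} (hc : HasSum (fun n => c n * x ^ n) s)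
    (hc' : Summable fun n => ‖c n * x ^ n‖) :
    HasSum (fun n => (∑ k ∈ range (n + 1), ∑ j ∈ range (k + 1),
      c j * c (k - j) * c (n - k)) * x ^ n) (s ^ 3) := by
  have hsq := hasSum_sum_range_mul_of_summable_norm hc' hc'
  have hcube := hasSum_sum_range_mul_of_summable_norm
    (summable_norm_sum_mul_range_of_summable_norm hc' hc') hc'
  rw [hsq.tsum_eq, hc.tsum_eq, ← pow_two, ← pow_succ] at hcube
  convert hcube using 2 with n
  simp only [sum_range_mul_pow_mul_mul_pow]
  simp only [sum_mul]

theorem power_series_solution_space_general (lam : ℝ) (c : ℕ → ℝ)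
    (hrec : ∀ n : ℕ,
      ((n : ℝ) + 1) * ((n : ℝ) + 2) * c (n + 2)
        = lam * ((∑ k ∈ Finset.range (n + 1), ∑ j ∈ Finset.range (k + 1),
            c j * c (k - j) * c (n - k)) - c n))
    (R : ℝ) (f : ℝ → ℝ)
    (hf : ∀ x : ℝ, |x| < R → HasSum (fun n : ℕ => c n * x ^ n) (f x))
    (u : ℝ → ℝ → ℝ) (hu : ∀ x t : ℝ, u x t = f x) :
    ∀ x t : ℝ, |x| < R →
      deriv (fun s => u x s) t - iteratedDeriv 2 (fun y => u y t) x
        + lam * ((u x t)^3 - u x t) = 0 := by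
  intro x t hx
  have habs : Summable fun n => ‖c n * x ^ n‖ := by
    simpa only [norm_mul, norm_pow, Real.norm_eq_abs] using
      summable_abs_mul_pow (fun y hy => (hf y hy).summable) (abs_nonneg x) hx
  have hsecond : HasSum (fun n => derivCoeff (derivCoeff c) n * x ^ n)
      (lam * (f x ^ 3 - f x)) := by
    refine (((hasSum_cube_mul_pow (hf x hx) habs).sub (hf x hx)).mul_left lam).congr_fun
      fun n => ?_
    rw [derivCoeff_derivCoeff, hrec]
    ring
  simp only [hu, deriv_const, iteratedDeriv_two_eq_tsum hf hx, hsecond.tsum_eq]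
  ring

/-- Suppose `λ ≠ 0`, the coefficients `c n` satisfy the recurrence
`(n+1)·(n+2)·c(n+2) = λ·(Σ_{k≤n} Σ_{j≤k} c j · c (k-j) · c (n-k) - c n)`, and the
power series `Σ c n xⁿ` converges to `f x` for `|x| < R` with `R > 0`. Then
`u(x,t) = f(x)` satisfies the Chaffee–Infante equation at every point `(x,t)`
with `|x| < R`. -/
theorem power_series_solution_space (lam : ℝ) (hlam : lam ≠ 0) (c : ℕ → ℝ)
    (hrec : ∀ n : ℕ,
      ((n : ℝ) + 1) * ((n : ℝ) + 2) * c (n + 2)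
        = lam * ((∑ k ∈ Finset.range (n + 1), ∑ j ∈ Finset.range (k + 1),
            c j * c (k - j) * c (n - k)) - c n))
    (R : ℝ) (hR : 0 < R) (f : ℝ → ℝ)
    (hf : ∀ x : ℝ, |x| < R → HasSum (fun n : ℕ => c n * x ^ n) (f x))
    (u : ℝ → ℝ → ℝ) (hu : ∀ x t : ℝ, u x t = f x) :
    ∀ x t : ℝ, |x| < R →
      deriv (fun s => u x s) t - iteratedDeriv 2 (fun y => u y t) x
        + lam * ((u x t)^3 - u x t) = 0 :=
  power_series_solution_space_general lam c hrec R f hf u hu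
end

section
/- Let λ ≠ 0 be a real number and let u, v : ℝ × ℝ → ℝ be three times continuously differentiable functions such that u solves the Chaffee–Infante equation u_t - u_xx + λ(u³ - u) = 0 and v solves its adjoint equation λ(3u²v - v) - v_t - v_xx = 0, at every point of ℝ². Then the pair of conserved vectors associated with the time-translation symmetry G₁ = ∂/∂t, namely T^t = v·(-u_xx + λu³ - λu) and T^x = -u_t·v_x + u_tx·v, satisfies the conservation law ∂T^t/∂t + ∂T^x/∂x = 0 at every point of ℝ². -/
/-! By the product rule the `u_tx v_x` terms of `D_x T^x` cancel, and
`D_t T^t + D_x T^x = v_t · (u_t - u_xx + λ(u³ - u)) + u_t · (λ(3u²v - v) - v_t - v_xx)`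
`+ v · (u_txx - u_xxt)`. The first two terms vanish by the two equations, the last by the
symmetry of mixed partial derivatives of the `C³` function `u`. -/

open Function

section PartialDerivatives

variable {E : Type*} [NormedAddCommGroup E] [NormedSpace ℝ E]

noncomputable def partialFst (f : ℝ → ℝ → E) (x t : ℝ) : E := deriv (fun y => f y t) x

noncomputable def partialSnd (f : ℝ → ℝ → E) (x t : ℝ) : E := deriv (fun s => f x s) t

theorem HasFDerivAt.hasDerivAt_fst_slice {g : ℝ × ℝ → E} {g' : ℝ × ℝ →L[ℝ] E}
    {x t : ℝ} (hg : HasFDerivAt g g' (x, t)) : HasDerivAt (fun y => g (y, t)) (g' (1, 0)) x :=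
  hg.comp_hasDerivAt x ((hasDerivAt_id x).prodMk (hasDerivAt_const x t))

theorem HasFDerivAt.hasDerivAt_snd_slice {g : ℝ × ℝ → E} {g' : ℝ × ℝ →L[ℝ] E}
    {x t : ℝ} (hg : HasFDerivAt g g' (x, t)) : HasDerivAt (fun s => g (x, s)) (g' (0, 1)) t :=
  hg.comp_hasDerivAt t ((hasDerivAt_const t x).prodMk (hasDerivAt_id t))

variable {f : ℝ → ℝ → E} {x t : ℝ}

theorem hasDerivAt_partialFst (hf : DifferentiableAt ℝ (uncurry f) (x, t)) :
    HasDerivAt (fun y => f y t) (partialFst f x t) x :=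
  (hf.hasFDerivAt.hasDerivAt_fst_slice.differentiableAt).hasDerivAt

theorem hasDerivAt_partialSnd (hf : DifferentiableAt ℝ (uncurry f) (x, t)) :
    HasDerivAt (fun s => f x s) (partialSnd f x t) t :=
  (hf.hasFDerivAt.hasDerivAt_snd_slice.differentiableAt).hasDerivAt

theorem partialFst_eq_fderiv (hf : DifferentiableAt ℝ (uncurry f) (x, t)) :
    partialFst f x t = fderiv ℝ (uncurry f) (x, t) (1, 0) :=
  hf.hasFDerivAt.hasDerivAt_fst_slice.deriv

theorem partialSnd_eq_fderiv (hf : DifferentiableAt ℝ (uncurry f) (x, t)) :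
    partialSnd f x t = fderiv ℝ (uncurry f) (x, t) (0, 1) :=
  hf.hasFDerivAt.hasDerivAt_snd_slice.deriv

theorem ContDiff.partialFst {n : WithTop ℕ∞} (hf : ContDiff ℝ (n + 1) (uncurry f)) :
    ContDiff ℝ n (uncurry (_root_.partialFst f)) := by
  have hdiff := hf.differentiable (by simp)
  have : uncurry (_root_.partialFst f) = fun p => fderiv ℝ (uncurry f) p (1, 0) :=
    funext fun p => partialFst_eq_fderiv (hdiff p)
  rw [this]
  exact (hf.fderiv_right le_rfl).clm_apply contDiff_const

theorem ContDiff.partialSnd {n : WithTop ℕ∞} (hf : ContDiff ℝ (n + 1) (uncurry f)) :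
    ContDiff ℝ n (uncurry (_root_.partialSnd f)) := by
  have hdiff := hf.differentiable (by simp)
  have : uncurry (_root_.partialSnd f) = fun p => fderiv ℝ (uncurry f) p (0, 1) :=
    funext fun p => partialSnd_eq_fderiv (hdiff p)
  rw [this]
  exact (hf.fderiv_right le_rfl).clm_apply contDiff_const

theorem partialFst_partialSnd_comm (hf : ContDiff ℝ 2 (uncurry f)) :
    partialFst (partialSnd f) = partialSnd (partialFst f) := by
  funext x t
  have hdiff := hf.differentiable (by simp)
  have hdiff2 : Differentiable ℝ (fderiv ℝ (uncurry f)) :=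
    (hf.fderiv_right (m := 1) (by norm_num)).differentiable (by simp)
  have hsnd : partialSnd f = fun x t => fderiv ℝ (uncurry f) (x, t) (0, 1) :=
    funext₂ fun x t => partialSnd_eq_fderiv (hdiff (x, t))
  have hfst : partialFst f = fun x t => fderiv ℝ (uncurry f) (x, t) (1, 0) :=
    funext₂ fun x t => partialFst_eq_fderiv (hdiff (x, t))
  have hfst_snd : partialFst (partialSnd f) x t
      = fderiv ℝ (fderiv ℝ (uncurry f)) (x, t) (1, 0) (0, 1) := by
    rw [hsnd, partialFst]
    simpa using ((hdiff2 (x, t)).hasFDerivAt.clm_apply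
      (hasFDerivAt_const (0, 1) (x, t))).hasDerivAt_fst_slice.deriv
  have hsnd_fst : partialSnd (partialFst f) x t
      = fderiv ℝ (fderiv ℝ (uncurry f)) (x, t) (0, 1) (1, 0) := by
    rw [hfst, partialSnd]
    simpa using ((hdiff2 (x, t)).hasFDerivAt.clm_apply
      (hasFDerivAt_const (1, 0) (x, t))).hasDerivAt_snd_slice.deriv
  rw [hfst_snd, hsnd_fst]
  exact hf.contDiffAt.isSymmSndFDerivAt (by simp) _ _

theorem deriv_eq_partialFst :
    deriv (fun y => f y t) x = partialFst f x t := rfl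

theorem deriv_eq_partialSnd :
    deriv (fun s => f x s) t = partialSnd f x t := rfl

theorem iteratedDeriv_two_eq_partialFst_partialFst :
    iteratedDeriv 2 (fun y => f y t) x = partialFst (partialFst f) x t := by
  rw [iteratedDeriv_succ, iteratedDeriv_one]
  rfl

theorem partialSnd_partialFst_partialFst (hf : ContDiff ℝ 3 (uncurry f)) :
    partialSnd (partialFst (partialFst f)) = partialFst (partialFst (partialSnd f)) := by
  rw [← partialFst_partialSnd_comm (hf.partialFst (n := 2)),
    partialFst_partialSnd_comm (hf.of_le (by norm_num))]

end PartialDerivatives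

section ChaffeeInfante

variable {u v : ℝ → ℝ → ℝ} {x t : ℝ}

theorem hasDerivAt_conservedDensity (lam : ℝ) (hu : ContDiff ℝ 3 (uncurry u))
    (hv : Differentiable ℝ (uncurry v)) :
    HasDerivAt (fun s => v x s * (-partialFst (partialFst u) x s + lam * u x s ^ 3 - lam * u x s))
      (partialSnd v x t * (-partialFst (partialFst u) x t + lam * u x t ^ 3 - lam * u x t)
        + v x t * (-partialSnd (partialFst (partialFst u)) x t
          + lam * (3 * u x t ^ 2 * partialSnd u x t) - lam * partialSnd u x t)) t := by
  have hu_xx : Differentiable ℝ (uncurry (partialFst (partialFst u))) :=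
    ((hu.partialFst (n := 2)).partialFst (n := 1)).differentiable one_ne_zero
  have hu_t := hasDerivAt_partialSnd (hu.differentiable (by norm_num) (x, t))
  exact ((hasDerivAt_partialSnd (hv (x, t))).fun_mul
    (((hasDerivAt_partialSnd (hu_xx (x, t))).fun_neg.fun_add
      ((hu_t.fun_pow 3).const_mul lam)).fun_sub (hu_t.const_mul lam))).congr_deriv (by norm_num)

theorem hasDerivAt_conservedFlux (hu : ContDiff ℝ 3 (uncurry u))
    (hv : ContDiff ℝ 2 (uncurry v)) :
    HasDerivAt
      (fun y => -partialSnd u y t * partialFst v y t + partialFst (partialSnd u) y t * v y t)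
      (-partialSnd u x t * partialFst (partialFst v) x t
        + partialFst (partialFst (partialSnd u)) x t * v x t) x := by
  have hu_t : ContDiff ℝ 2 (uncurry (partialSnd u)) := hu.partialSnd (n := 2)
  have hu_tx : Differentiable ℝ (uncurry (partialFst (partialSnd u))) :=
    (hu_t.partialFst (n := 1)).differentiable one_ne_zero
  have hv_x : Differentiable ℝ (uncurry (partialFst v)) :=
    (hv.partialFst (n := 1)).differentiable one_ne_zero
  exact ((hasDerivAt_partialFst (hu_t.differentiable two_ne_zero (x, t))).fun_neg.fun_mul
    (hasDerivAt_partialFst (hv_x (x, t)))).fun_add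
    ((hasDerivAt_partialFst (hu_tx (x, t))).fun_mul
      (hasDerivAt_partialFst (hv.differentiable two_ne_zero (x, t)))) |>.congr_deriv (by ring)

end ChaffeeInfante

theorem conservation_law_time_translation_general (lam : ℝ)
    (u v : ℝ → ℝ → ℝ)
    (hu : ContDiff ℝ 3 (fun p : ℝ × ℝ => u p.1 p.2))
    (hv : ContDiff ℝ 3 (fun p : ℝ × ℝ => v p.1 p.2))
    (hsol : ∀ x t : ℝ,
      deriv (fun s => u x s) t - iteratedDeriv 2 (fun y => u y t) x
        + lam * ((u x t)^3 - u x t) = 0)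
    (hadj : ∀ x t : ℝ,
      lam * (3 * (u x t)^2 * v x t - v x t)
        - deriv (fun s => v x s) t - iteratedDeriv 2 (fun y => v y t) x = 0)
    (Tt Tx : ℝ → ℝ → ℝ)
    (hTt : ∀ x t : ℝ, Tt x t
      = v x t * (-(iteratedDeriv 2 (fun y => u y t) x)
          + lam * (u x t)^3 - lam * u x t))
    (hTx : ∀ x t : ℝ, Tx x t
      = -(deriv (fun s => u x s) t) * deriv (fun y => v y t) x
        + deriv (fun y => deriv (fun s => u y s) t) x * v x t) :
    ∀ x t : ℝ,
      deriv (fun s => Tt x s) t + deriv (fun y => Tx y t) x = 0 := by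
  intro x t
  simp only [iteratedDeriv_two_eq_partialFst_partialFst, deriv_eq_partialFst, deriv_eq_partialSnd]
    at hsol hadj hTt hTx
  simp only [hTt, hTx]
  rw [(hasDerivAt_conservedDensity lam hu (hv.differentiable (by norm_num))).deriv,
    (hasDerivAt_conservedFlux hu (hv.of_le (by norm_num))).deriv,
    congrFun₂ (partialSnd_partialFst_partialFst hu) x t]
  linear_combination partialSnd v x t * hsol x t + partialSnd u x t * hadj x t

/-- Conservation law from the time-translation symmetry `G₁ = ∂/∂t`: if `u`
solves the Chaffee–Infante equation and `v` solves its adjoint equation (both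
C³, `λ ≠ 0`), then `T^t = v·(-u_xx + λu³ - λu)` and `T^x = -u_t·v_x + u_tx·v`
satisfy `∂T^t/∂t + ∂T^x/∂x = 0` everywhere. -/
theorem conservation_law_time_translation (lam : ℝ) (hlam : lam ≠ 0)
    (u v : ℝ → ℝ → ℝ)
    (hu : ContDiff ℝ 3 (fun p : ℝ × ℝ => u p.1 p.2))
    (hv : ContDiff ℝ 3 (fun p : ℝ × ℝ => v p.1 p.2))
    (hsol : ∀ x t : ℝ,
      deriv (fun s => u x s) t - iteratedDeriv 2 (fun y => u y t) x
        + lam * ((u x t)^3 - u x t) = 0)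
    (hadj : ∀ x t : ℝ,
      lam * (3 * (u x t)^2 * v x t - v x t)
        - deriv (fun s => v x s) t - iteratedDeriv 2 (fun y => v y t) x = 0)
    (Tt Tx : ℝ → ℝ → ℝ)
    (hTt : ∀ x t : ℝ, Tt x t
      = v x t * (-(iteratedDeriv 2 (fun y => u y t) x)
          + lam * (u x t)^3 - lam * u x t))
    (hTx : ∀ x t : ℝ, Tx x t
      = -(deriv (fun s => u x s) t) * deriv (fun y => v y t) x
        + deriv (fun y => deriv (fun s => u y s) t) x * v x t) :
    ∀ x t : ℝ,
      deriv (fun s => Tt x s) t + deriv (fun y => Tx y t) x = 0 :=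
  conservation_law_time_translation_general lam u v hu hv hsol hadj Tt Tx hTt hTx
end

section
/- Let λ ≠ 0 be a real number and let u, v : ℝ × ℝ → ℝ be three times continuously differentiable functions such that u solves the Chaffee–Infante equation u_t - u_xx + λ(u³ - u) = 0 and v solves its adjoint equation λ(3u²v - v) - v_t - v_xx = 0, at every point of ℝ². Then the pair of conserved vectors associated with the space-translation symmetry G₂ = ∂/∂x, namely T^t = -u_x·v and T^x = v·(u_t - u_xx + λu³ - λu) - u_x·v_x + u_xx·v, satisfies the conservation law ∂T^t/∂t + ∂T^x/∂x = 0 at every point of ℝ². -/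
/-!
Once the Chaffee–Infante equation is substituted into `T^x`, the divergence
`D_t T^t + D_x T^x` reduces to `(u_xxx - u_tx) v - u_x (v_t + v_xx)`. Differentiating the
equation in `x` and using the symmetry of second derivatives gives
`u_tx = u_xxx - λ (3u² - 1) u_x`, so the divergence is `u_x` times the left-hand side of
the adjoint equation, which vanishes.
-/

section PartialDeriv

variable {𝕜 E G : Type*} [NontriviallyNormedField 𝕜] [NormedAddCommGroup E] [NormedSpace 𝕜 E]
  [NormedAddCommGroup G] [NormedSpace 𝕜 G]

variable (𝕜) in
noncomputable def partialDeriv (v : E) (F : E → G) (p : E) : G := fderiv 𝕜 F p v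

theorem ContDiff.partialDeriv {n m : WithTop ℕ∞} {F : E → G} (hF : ContDiff 𝕜 n F)
    (hmn : m + 1 ≤ n) (v : E) : ContDiff 𝕜 m (partialDeriv 𝕜 v F) :=
  (hF.fderiv_right hmn).clm_apply contDiff_const

theorem partialDeriv_partialDeriv {F : E → G} {p : E} (hF : DifferentiableAt 𝕜 (fderiv 𝕜 F) p)
    (v w : E) : partialDeriv 𝕜 w (partialDeriv 𝕜 v F) p = fderiv 𝕜 (fderiv 𝕜 F) p w v := by
  change fderiv 𝕜 (fun q => fderiv 𝕜 F q v) p w = _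
  rw [fderiv_clm_apply hF (differentiableAt_const v)]
  simp

theorem ContDiffAt.partialDeriv_comm {n : WithTop ℕ∞} {F : E → G} {p : E}
    (hF : ContDiffAt 𝕜 n F p) (hn : minSmoothness 𝕜 2 ≤ n) (v w : E) :
    partialDeriv 𝕜 v (partialDeriv 𝕜 w F) p = partialDeriv 𝕜 w (partialDeriv 𝕜 v F) p := by
  have hF' : DifferentiableAt 𝕜 (fderiv 𝕜 F) p :=
    (hF.fderiv_right (m := 1) (le_minSmoothness.trans hn)).differentiableAt one_ne_zero
  rw [partialDeriv_partialDeriv hF', partialDeriv_partialDeriv hF']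
  exact (hF.isSymmSndFDerivAt hn).eq v w

end PartialDeriv

section Slices

variable {𝕜 G : Type*} [NontriviallyNormedField 𝕜] [NormedAddCommGroup G] [NormedSpace 𝕜 G]
  {F : 𝕜 × 𝕜 → G} {f : 𝕜 → 𝕜 → G} {x t : 𝕜}

theorem hasDerivAt_fst_slice (hF : DifferentiableAt 𝕜 F (x, t)) :
    HasDerivAt (fun y => F (y, t)) (partialDeriv 𝕜 (1, 0) F (x, t)) x :=
  hF.hasFDerivAt.comp_hasDerivAt x ((hasDerivAt_id x).prodMk (hasDerivAt_const x t))

theorem hasDerivAt_snd_slice (hF : DifferentiableAt 𝕜 F (x, t)) :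
    HasDerivAt (fun s => F (x, s)) (partialDeriv 𝕜 (0, 1) F (x, t)) t :=
  hF.hasFDerivAt.comp_hasDerivAt t ((hasDerivAt_const t x).prodMk (hasDerivAt_id t))

theorem deriv_fst_slice (hf : Differentiable 𝕜 (fun p : 𝕜 × 𝕜 => f p.1 p.2)) :
    deriv (fun y => f y t) x = partialDeriv 𝕜 (1, 0) (fun p : 𝕜 × 𝕜 => f p.1 p.2) (x, t) :=
  (hasDerivAt_fst_slice (hf _)).deriv

theorem deriv_snd_slice (hf : Differentiable 𝕜 (fun p : 𝕜 × 𝕜 => f p.1 p.2)) :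
    deriv (fun s => f x s) t = partialDeriv 𝕜 (0, 1) (fun p : 𝕜 × 𝕜 => f p.1 p.2) (x, t) :=
  (hasDerivAt_snd_slice (hf _)).deriv

theorem iteratedDeriv_two_fst_slice (hf : ContDiff 𝕜 2 (fun p : 𝕜 × 𝕜 => f p.1 p.2)) :
    iteratedDeriv 2 (fun y => f y t) x
      = partialDeriv 𝕜 (1, 0) (partialDeriv 𝕜 (1, 0) (fun p : 𝕜 × 𝕜 => f p.1 p.2)) (x, t) := by
  have hfx : deriv (fun y => f y t)
      = fun y => partialDeriv 𝕜 (1, 0) (fun p : 𝕜 × 𝕜 => f p.1 p.2) (y, t) :=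
    funext fun _ => deriv_fst_slice (hf.differentiable two_ne_zero)
  rw [iteratedDeriv_succ, iteratedDeriv_one, hfx]
  exact (hasDerivAt_fst_slice
    ((hf.partialDeriv (m := 1) le_rfl _).differentiable one_ne_zero _)).deriv

end Slices

notation "∂ₓ" => partialDeriv ℝ ((1 : ℝ), (0 : ℝ))
notation "∂ₜ" => partialDeriv ℝ ((0 : ℝ), (1 : ℝ))

section ChaffeeInfante

variable {lam : ℝ} {U V : ℝ × ℝ → ℝ}

theorem partialT_partialX_of_chaffeeInfante (hU : ContDiff ℝ 3 U)
    (hsol : ∀ p, ∂ₜ U p - ∂ₓ (∂ₓ U) p + lam * (U p ^ 3 - U p) = 0) (p : ℝ × ℝ) :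
    ∂ₜ (∂ₓ U) p = ∂ₓ (∂ₓ (∂ₓ U)) p - lam * (3 * U p ^ 2 - 1) * ∂ₓ U p := by
  obtain ⟨x, t⟩ := p
  have hUt : ∂ₜ U = fun q => ∂ₓ (∂ₓ U) q - lam * (U q ^ 3 - U q) :=
    funext fun q => by linear_combination hsol q
  have hU' : Differentiable ℝ U := hU.differentiable (by norm_num)
  have hUxx : Differentiable ℝ (∂ₓ (∂ₓ U)) :=
    ((hU.partialDeriv (m := 2) (by norm_num) _).partialDeriv (m := 1) (by norm_num) _).differentiable
      one_ne_zero
  have hUt' : Differentiable ℝ (∂ₜ U) := hUt ▸ hUxx.sub (((hU'.pow 3).sub hU').const_mul lam)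
  have hUx := hasDerivAt_fst_slice (hU' (x, t))
  have hUtx := (hasDerivAt_fst_slice (hUt' (x, t))).unique <| by
    rw [hUt]
    exact (hasDerivAt_fst_slice (hUxx (x, t))).sub (((hUx.pow 3).sub hUx).const_mul lam)
  rw [(hU.contDiffAt).partialDeriv_comm (by norm_num), hUtx]
  push_cast
  ring

theorem deriv_add_deriv_eq_zero_of_chaffeeInfante (hU : ContDiff ℝ 3 U) (hV : ContDiff ℝ 2 V)
    (hsol : ∀ p, ∂ₜ U p - ∂ₓ (∂ₓ U) p + lam * (U p ^ 3 - U p) = 0)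
    (hadj : ∀ p, lam * (3 * U p ^ 2 * V p - V p) - ∂ₜ V p - ∂ₓ (∂ₓ V) p = 0) (x t : ℝ) :
    deriv (fun s => -∂ₓ U (x, s) * V (x, s)) t
      + deriv (fun y => -(∂ₓ U (y, t) * ∂ₓ V (y, t)) + ∂ₓ (∂ₓ U) (y, t) * V (y, t)) x = 0 := by
  have hUx : ContDiff ℝ 2 (∂ₓ U) := hU.partialDeriv (by norm_num) _
  have hUxx : Differentiable ℝ (∂ₓ (∂ₓ U)) :=
    (hUx.partialDeriv (m := 1) (by norm_num) _).differentiable one_ne_zero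
  have hVx : Differentiable ℝ (∂ₓ V) :=
    (hV.partialDeriv (m := 1) (by norm_num) _).differentiable one_ne_zero
  have hV' : Differentiable ℝ V := hV.differentiable two_ne_zero
  have hUx' : Differentiable ℝ (∂ₓ U) := hUx.differentiable two_ne_zero
  have hTt : HasDerivAt (fun s => -∂ₓ U (x, s) * V (x, s))
      (-∂ₜ (∂ₓ U) (x, t) * V (x, t) + -∂ₓ U (x, t) * ∂ₜ V (x, t)) t :=
    (hasDerivAt_snd_slice (hUx' (x, t))).neg.mul (hasDerivAt_snd_slice (hV' (x, t)))
  have hTx : HasDerivAt (fun y => -(∂ₓ U (y, t) * ∂ₓ V (y, t)) + ∂ₓ (∂ₓ U) (y, t) * V (y, t))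
      (-(∂ₓ (∂ₓ U) (x, t) * ∂ₓ V (x, t) + ∂ₓ U (x, t) * ∂ₓ (∂ₓ V) (x, t))
        + (∂ₓ (∂ₓ (∂ₓ U)) (x, t) * V (x, t) + ∂ₓ (∂ₓ U) (x, t) * ∂ₓ V (x, t))) x :=
    ((hasDerivAt_fst_slice (hUx' (x, t))).mul (hasDerivAt_fst_slice (hVx (x, t)))).neg.add
      ((hasDerivAt_fst_slice (hUxx (x, t))).mul (hasDerivAt_fst_slice (hV' (x, t))))
  rw [hTt.deriv, hTx.deriv, partialT_partialX_of_chaffeeInfante hU hsol]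
  linear_combination ∂ₓ U (x, t) * hadj (x, t)

end ChaffeeInfante

theorem conservation_law_space_translation_general (lam : ℝ)
    (u v : ℝ → ℝ → ℝ)
    (hu : ContDiff ℝ 3 (fun p : ℝ × ℝ => u p.1 p.2))
    (hv : ContDiff ℝ 3 (fun p : ℝ × ℝ => v p.1 p.2))
    (hsol : ∀ x t : ℝ,
      deriv (fun s => u x s) t - iteratedDeriv 2 (fun y => u y t) x
        + lam * ((u x t)^3 - u x t) = 0)
    (hadj : ∀ x t : ℝ,
      lam * (3 * (u x t)^2 * v x t - v x t)
        - deriv (fun s => v x s) t - iteratedDeriv 2 (fun y => v y t) x = 0)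
    (Tt Tx : ℝ → ℝ → ℝ)
    (hTt : ∀ x t : ℝ, Tt x t = -(deriv (fun y => u y t) x) * v x t)
    (hTx : ∀ x t : ℝ, Tx x t
      = v x t * (deriv (fun s => u x s) t - iteratedDeriv 2 (fun y => u y t) x
          + lam * (u x t)^3 - lam * u x t)
        - deriv (fun y => u y t) x * deriv (fun y => v y t) x
        + iteratedDeriv 2 (fun y => u y t) x * v x t) :
    ∀ x t : ℝ,
      deriv (fun s => Tt x s) t + deriv (fun y => Tx y t) x = 0 := by
  have hv2 : ContDiff ℝ 2 (fun p : ℝ × ℝ => v p.1 p.2) := hv.of_le (by norm_num)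
  have hu1 := hu.differentiable (by norm_num)
  have hv1 := hv.differentiable (by norm_num)
  simp only [deriv_fst_slice hu1, deriv_fst_slice hv1, deriv_snd_slice hu1, deriv_snd_slice hv1,
    iteratedDeriv_two_fst_slice (hu.of_le (by norm_num)), iteratedDeriv_two_fst_slice hv2]
    at hsol hadj hTt hTx
  intro x t
  have hTx' : (fun y => Tx y t) = fun y => -(∂ₓ (fun p : ℝ × ℝ => u p.1 p.2) (y, t)
      * ∂ₓ (fun p : ℝ × ℝ => v p.1 p.2) (y, t))
      + ∂ₓ (∂ₓ (fun p : ℝ × ℝ => u p.1 p.2)) (y, t) * v y t :=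
    funext fun y => by rw [hTx]; linear_combination v y t * hsol y t
  rw [funext (hTt x), hTx']
  exact deriv_add_deriv_eq_zero_of_chaffeeInfante hu hv2 (fun p => hsol p.1 p.2)
    (fun p => hadj p.1 p.2) x t

/-- Conservation law from the space-translation symmetry `G₂ = ∂/∂x`: if `u`
solves the Chaffee–Infante equation and `v` solves its adjoint equation (both
C³, `λ ≠ 0`), then `T^t = -u_x·v` and
`T^x = v·(u_t - u_xx + λu³ - λu) - u_x·v_x + u_xx·v`
satisfy `∂T^t/∂t + ∂T^x/∂x = 0` everywhere. -/
theorem conservation_law_space_translation (lam : ℝ) (hlam : lam ≠ 0)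
    (u v : ℝ → ℝ → ℝ)
    (hu : ContDiff ℝ 3 (fun p : ℝ × ℝ => u p.1 p.2))
    (hv : ContDiff ℝ 3 (fun p : ℝ × ℝ => v p.1 p.2))
    (hsol : ∀ x t : ℝ,
      deriv (fun s => u x s) t - iteratedDeriv 2 (fun y => u y t) x
        + lam * ((u x t)^3 - u x t) = 0)
    (hadj : ∀ x t : ℝ,
      lam * (3 * (u x t)^2 * v x t - v x t)
        - deriv (fun s => v x s) t - iteratedDeriv 2 (fun y => v y t) x = 0)
    (Tt Tx : ℝ → ℝ → ℝ)
    (hTt : ∀ x t : ℝ, Tt x t = -(deriv (fun y => u y t) x) * v x t)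
    (hTx : ∀ x t : ℝ, Tx x t
      = v x t * (deriv (fun s => u x s) t - iteratedDeriv 2 (fun y => u y t) x
          + lam * (u x t)^3 - lam * u x t)
        - deriv (fun y => u y t) x * deriv (fun y => v y t) x
        + iteratedDeriv 2 (fun y => u y t) x * v x t) :
    ∀ x t : ℝ,
      deriv (fun s => Tt x s) t + deriv (fun y => Tx y t) x = 0 :=
  conservation_law_space_translation_general lam u v hu hv hsol hadj Tt Tx hTt hTx
end

section
/- Let λ ≠ 0 and a be real numbers and let u, v : ℝ × ℝ → ℝ be three times continuously differentiable functions such that u solves the Chaffee–Infante equation u_t - u_xx + λ(u³ - u) = 0 and v solves its adjoint equation λ(3u²v - v) - v_t - v_xx = 0, at every point of ℝ². Then the pair of conserved vectors associated with the combined symmetry a·G₁ + G₂ (with characteristic w = -a·u_x - u_t), namely T^t = v·(-u_xx + λu³ - λu - a·u_x) and T^x = a·(-u_x·v_x + u_xx·v) + (-u_t·v_x + u_tx·v), satisfies the conservation law ∂T^t/∂t + ∂T^x/∂x = 0 at every point of ℝ². -/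
noncomputable def px (g : ℝ × ℝ → ℝ) : ℝ × ℝ → ℝ := fun p => fderiv ℝ g p (1, 0)
noncomputable def pt (g : ℝ × ℝ → ℝ) : ℝ × ℝ → ℝ := fun p => fderiv ℝ g p (0, 1)

lemma hasDerivAt_px {g : ℝ × ℝ → ℝ} {x t : ℝ} (hg : DifferentiableAt ℝ g (x, t)) :
    HasDerivAt (fun y => g (y, t)) (px g (x, t)) x := by
  have h : HasDerivAt (fun y : ℝ => (y, t)) ((1 : ℝ), (0 : ℝ)) x :=
    (hasDerivAt_id x).prodMk (hasDerivAt_const x t)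
  exact hg.hasFDerivAt.comp_hasDerivAt x h

lemma hasDerivAt_pt {g : ℝ × ℝ → ℝ} {x t : ℝ} (hg : DifferentiableAt ℝ g (x, t)) :
    HasDerivAt (fun s => g (x, s)) (pt g (x, t)) t := by
  have h : HasDerivAt (fun s : ℝ => (x, s)) ((0 : ℝ), (1 : ℝ)) t :=
    (hasDerivAt_const t x).prodMk (hasDerivAt_id t)
  exact hg.hasFDerivAt.comp_hasDerivAt t h

lemma contDiff_px {g : ℝ × ℝ → ℝ} {n : WithTop ℕ∞} (hg : ContDiff ℝ (n + 1) g) :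
    ContDiff ℝ n (px g) :=
  (hg.fderiv_right le_rfl).clm_apply contDiff_const

lemma contDiff_pt {g : ℝ × ℝ → ℝ} {n : WithTop ℕ∞} (hg : ContDiff ℝ (n + 1) g) :
    ContDiff ℝ n (pt g) :=
  (hg.fderiv_right le_rfl).clm_apply contDiff_const

lemma px_pt_comm {g : ℝ × ℝ → ℝ} (hg : ContDiff ℝ 2 g) : px (pt g) = pt (px g) := by
  funext p
  have hd : Differentiable ℝ (fderiv ℝ g) :=
    (hg.fderiv_right (m := 1) (by norm_num)).differentiable (by norm_num)
  have hf : ∀ y, HasFDerivAt g (fderiv ℝ g y) y := fun y =>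
    ((hg.differentiable (by norm_num)) y).hasFDerivAt
  have hx : HasFDerivAt (fderiv ℝ g) (fderiv ℝ (fderiv ℝ g) p) p := (hd p).hasFDerivAt
  have e : ∀ w : ℝ × ℝ, fderiv ℝ (fun q => fderiv ℝ g q w) p =
      ((ContinuousLinearMap.apply ℝ ℝ w).comp (fderiv ℝ (fderiv ℝ g) p)) := fun w =>
    HasFDerivAt.fderiv ((ContinuousLinearMap.apply ℝ ℝ w).hasFDerivAt.comp p hx)
  show fderiv ℝ (fun q => fderiv ℝ g q (0,1)) p (1,0) =
    fderiv ℝ (fun q => fderiv ℝ g q (1,0)) p (0,1)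
  rw [e, e]
  simp only [ContinuousLinearMap.coe_comp', Function.comp_apply,
    ContinuousLinearMap.apply_apply]
  exact second_derivative_symmetric hf hx (1,0) (0,1)



/-- Conservation law from the combined symmetry `a·G₁ + G₂` with characteristic
`w = -a·u_x - u_t`: if `u` solves the Chaffee–Infante equation and `v` solves
its adjoint equation (both C³, `λ ≠ 0`), then
`T^t = v·(-u_xx + λu³ - λu - a·u_x)` and
`T^x = a·(-u_x·v_x + u_xx·v) + (-u_t·v_x + u_tx·v)`
satisfy `∂T^t/∂t + ∂T^x/∂x = 0` everywhere. -/
theorem conservation_law_combined_translation (lam : ℝ) (hlam : lam ≠ 0) (a : ℝ)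
    (u v : ℝ → ℝ → ℝ)
    (hu : ContDiff ℝ 3 (fun p : ℝ × ℝ => u p.1 p.2))
    (hv : ContDiff ℝ 3 (fun p : ℝ × ℝ => v p.1 p.2))
    (hsol : ∀ x t : ℝ,
      deriv (fun s => u x s) t - iteratedDeriv 2 (fun y => u y t) x
        + lam * ((u x t)^3 - u x t) = 0)
    (hadj : ∀ x t : ℝ,
      lam * (3 * (u x t)^2 * v x t - v x t)
        - deriv (fun s => v x s) t - iteratedDeriv 2 (fun y => v y t) x = 0)
    (Tt Tx : ℝ → ℝ → ℝ)
    (hTt : ∀ x t : ℝ, Tt x t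
      = v x t * (-(iteratedDeriv 2 (fun y => u y t) x)
          + lam * (u x t)^3 - lam * u x t - a * deriv (fun y => u y t) x))
    (hTx : ∀ x t : ℝ, Tx x t
      = a * (-(deriv (fun y => u y t) x) * deriv (fun y => v y t) x
            + iteratedDeriv 2 (fun y => u y t) x * v x t)
        + (-(deriv (fun s => u x s) t) * deriv (fun y => v y t) x
            + deriv (fun y => deriv (fun s => u y s) t) x * v x t)) :
    ∀ x t : ℝ,
      deriv (fun s => Tt x s) t + deriv (fun y => Tx y t) x = 0 := by
  intro x t
  set U : ℝ × ℝ → ℝ := fun p : ℝ × ℝ => u p.1 p.2 with hUdef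
  set V : ℝ × ℝ → ℝ := fun p : ℝ × ℝ => v p.1 p.2 with hVdef
  have hU3 : ContDiff ℝ 3 U := hu
  have hV3 : ContDiff ℝ 3 V := hv
  have hU3' : ContDiff ℝ ((2 : WithTop ℕ∞) + 1) U := by exact_mod_cast hU3
  have hV3' : ContDiff ℝ ((2 : WithTop ℕ∞) + 1) V := by exact_mod_cast hV3
  have hUd : Differentiable ℝ U := hU3.differentiable (by norm_num)
  have hVd : Differentiable ℝ V := hV3.differentiable (by norm_num)
  have hU1c : ContDiff ℝ 2 (px U) := contDiff_px hU3'
  have hU2c : ContDiff ℝ 2 (pt U) := contDiff_pt hU3'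
  have hV1c : ContDiff ℝ 2 (px V) := contDiff_px hV3'
  have hU1c' : ContDiff ℝ ((1 : WithTop ℕ∞) + 1) (px U) := by exact_mod_cast hU1c
  have hU2c' : ContDiff ℝ ((1 : WithTop ℕ∞) + 1) (pt U) := by exact_mod_cast hU2c
  have hU1d : Differentiable ℝ (px U) := hU1c.differentiable (by norm_num)
  have hU2d : Differentiable ℝ (pt U) := hU2c.differentiable (by norm_num)
  have hV1d : Differentiable ℝ (px V) := hV1c.differentiable (by norm_num)
  have hU11d : Differentiable ℝ (px (px U)) :=
    (contDiff_px hU1c').differentiable (by norm_num)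
  have hU21d : Differentiable ℝ (px (pt U)) :=
    (contDiff_px hU2c').differentiable (by norm_num)
  -- conversion lemmas
  have conv1 : ∀ y s : ℝ, deriv (fun y' => u y' s) y = px U (y, s) := fun y s =>
    (hasDerivAt_px (hUd (y, s))).deriv
  have conv2 : ∀ y s : ℝ, deriv (fun s' => u y s') s = pt U (y, s) := fun y s =>
    (hasDerivAt_pt (hUd (y, s))).deriv
  have conv3 : ∀ y s : ℝ, iteratedDeriv 2 (fun y' => u y' s) y = px (px U) (y, s) := by
    intro y s
    have hd : deriv (fun y' => u y' s) = fun y' => px U (y', s) :=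
      funext fun y' => conv1 y' s
    rw [show (2 : ℕ) = 1 + 1 from rfl, iteratedDeriv_succ, iteratedDeriv_one, hd]
    exact (hasDerivAt_px (hU1d (y, s))).deriv
  have conv1v : ∀ y s : ℝ, deriv (fun y' => v y' s) y = px V (y, s) := fun y s =>
    (hasDerivAt_px (hVd (y, s))).deriv
  have conv2v : ∀ y s : ℝ, deriv (fun s' => v y s') s = pt V (y, s) := fun y s =>
    (hasDerivAt_pt (hVd (y, s))).deriv
  have conv3v : ∀ y s : ℝ, iteratedDeriv 2 (fun y' => v y' s) y = px (px V) (y, s) := by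
    intro y s
    have hd : deriv (fun y' => v y' s) = fun y' => px V (y', s) :=
      funext fun y' => conv1v y' s
    rw [show (2 : ℕ) = 1 + 1 from rfl, iteratedDeriv_succ, iteratedDeriv_one, hd]
    exact (hasDerivAt_px (hV1d (y, s))).deriv
  have conv4 : ∀ y s : ℝ, deriv (fun y' => deriv (fun s' => u y' s') s) y
      = px (pt U) (y, s) := by
    intro y s
    have hd : (fun y' => deriv (fun s' => u y' s') s) = fun y' => pt U (y', s) :=
      funext fun y' => conv2 y' s
    rw [hd]
    exact (hasDerivAt_px (hU2d (y, s))).deriv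
  -- PDE and adjoint in partial-derivative form
  have hPDE : ∀ y s : ℝ, pt U (y, s) = px (px U) (y, s) - lam * ((u y s)^3 - u y s) := by
    intro y s
    have h := hsol y s
    rw [conv2 y s, conv3 y s] at h
    linarith
  have hADJ : ∀ y s : ℝ, lam * (3 * (u y s)^2 * v y s - v y s)
      - pt V (y, s) - px (px V) (y, s) = 0 := by
    intro y s
    have h := hadj y s
    rw [conv2v y s, conv3v y s] at h
    linarith
  -- differentiated PDE in x and in t
  have hE1 : ∀ y s : ℝ, px (pt U) (y, s)
      = px (px (px U)) (y, s) - lam * (3 * (u y s)^2 * px U (y, s) - px U (y, s)) := by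
    intro y s
    have hL : HasDerivAt (fun z => pt U (z, s)) (px (pt U) (y, s)) y :=
      hasDerivAt_px (hU2d _)
    have h1 : HasDerivAt (fun z => px (px U) (z, s)) (px (px (px U)) (y, s)) y :=
      hasDerivAt_px (hU11d _)
    have h2 : HasDerivAt (fun z => u z s) (px U (y, s)) y := hasDerivAt_px (hUd _)
    have hR : HasDerivAt (fun z => px (px U) (z, s) - lam * ((u z s)^3 - u z s))
        (px (px (px U)) (y, s) - lam * (3 * (u y s)^2 * px U (y, s) - px U (y, s))) y := by
      have h3 := h1.sub (((h2.pow 3).sub h2).const_mul lam)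
      convert h3 using 1
      · rfl
      · rfl
      · rfl
      · norm_num
    have hfun : (fun z => pt U (z, s))
        = fun z => px (px U) (z, s) - lam * ((u z s)^3 - u z s) :=
      funext fun z => hPDE z s
    rw [hfun] at hL
    exact hL.unique hR
  have hE2 : ∀ y s : ℝ, pt (pt U) (y, s)
      = pt (px (px U)) (y, s) - lam * (3 * (u y s)^2 * pt U (y, s) - pt U (y, s)) := by
    intro y s
    have hL : HasDerivAt (fun z => pt U (y, z)) (pt (pt U) (y, s)) s :=
      hasDerivAt_pt (hU2d _)
    have h1 : HasDerivAt (fun z => px (px U) (y, z)) (pt (px (px U)) (y, s)) s :=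
      hasDerivAt_pt ((hU11d).differentiableAt)
    have h2 : HasDerivAt (fun z => u y z) (pt U (y, s)) s := hasDerivAt_pt (hUd _)
    have hR : HasDerivAt (fun z => px (px U) (y, z) - lam * ((u y z)^3 - u y z))
        (pt (px (px U)) (y, s) - lam * (3 * (u y s)^2 * pt U (y, s) - pt U (y, s))) s := by
      have h3 := h1.sub (((h2.pow 3).sub h2).const_mul lam)
      convert h3 using 1
      · rfl
      · rfl
      · rfl
      · norm_num
    have hfun : (fun z => pt U (y, z))
        = fun z => px (px U) (y, z) - lam * ((u y z)^3 - u y z) :=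
      funext fun z => hPDE y z
    rw [hfun] at hL
    exact hL.unique hR
  -- symmetry of mixed partials
  have hS1 : px (pt U) = pt (px U) := px_pt_comm (hU3.of_le (by norm_num))
  have hS3 : px (px (pt U)) (x, t) = pt (px (px U)) (x, t) := by
    rw [hS1, px_pt_comm hU1c]
  -- rewrite Tt and Tx as explicit functions
  have hTt' : (fun s => Tt x s)
      = fun s => v x s * (-(pt U (x, s)) - a * px U (x, s)) := by
    funext s
    rw [hTt x s, conv3 x s, conv1 x s]
    have h := hPDE x s
    linear_combination v x s * h
  have hTx' : (fun y => Tx y t)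
      = fun y => a * (-(px U (y, t)) * px V (y, t) + px (px U) (y, t) * v y t)
        + (-(pt U (y, t)) * px V (y, t) + px (pt U) (y, t) * v y t) := by
    funext y
    rw [hTx y t, conv1 y t, conv1v y t, conv3 y t, conv2 y t, conv4 y t]
  rw [hTt', hTx']
  -- compute the two derivatives
  have hD1 : HasDerivAt (fun s => v x s * (-(pt U (x, s)) - a * px U (x, s)))
      (pt V (x, t) * (-(pt U (x, t)) - a * px U (x, t))
        + v x t * (-(pt (pt U) (x, t)) - a * pt (px U) (x, t))) t := by
    have h1 : HasDerivAt (fun s => v x s) (pt V (x, t)) t := hasDerivAt_pt (hVd _)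
    have h2 : HasDerivAt (fun s => pt U (x, s)) (pt (pt U) (x, t)) t :=
      hasDerivAt_pt (hU2d _)
    have h3 : HasDerivAt (fun s => px U (x, s)) (pt (px U) (x, t)) t :=
      hasDerivAt_pt (hU1d _)
    exact h1.mul (h2.neg.sub (h3.const_mul a))
  have hD2 : HasDerivAt
      (fun y => a * (-(px U (y, t)) * px V (y, t) + px (px U) (y, t) * v y t)
        + (-(pt U (y, t)) * px V (y, t) + px (pt U) (y, t) * v y t))
      (a * ((-(px (px U) (x, t)) * px V (x, t) + -(px U (x, t)) * px (px V) (x, t))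
          + (px (px (px U)) (x, t) * v x t + px (px U) (x, t) * px V (x, t)))
        + ((-(px (pt U) (x, t)) * px V (x, t) + -(pt U (x, t)) * px (px V) (x, t))
          + (px (px (pt U)) (x, t) * v x t + px (pt U) (x, t) * px V (x, t)))) x := by
    have h1 : HasDerivAt (fun y => px U (y, t)) (px (px U) (x, t)) x :=
      hasDerivAt_px (hU1d _)
    have h2 : HasDerivAt (fun y => px V (y, t)) (px (px V) (x, t)) x :=
      hasDerivAt_px (hV1d _)
    have h3 : HasDerivAt (fun y => px (px U) (y, t)) (px (px (px U)) (x, t)) x :=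
      hasDerivAt_px (hU11d _)
    have h4 : HasDerivAt (fun y => v y t) (px V (x, t)) x := hasDerivAt_px (hVd _)
    have h5 : HasDerivAt (fun y => pt U (y, t)) (px (pt U) (x, t)) x :=
      hasDerivAt_px (hU2d _)
    have h6 : HasDerivAt (fun y => px (pt U) (y, t)) (px (px (pt U)) (x, t)) x :=
      hasDerivAt_px (hU21d _)
    exact (((h1.neg.mul h2).add (h3.mul h4)).const_mul a).add
      ((h5.neg.mul h2).add (h6.mul h4))
  rw [hD1.deriv, hD2.deriv]
  have h3' : px (pt U) (x, t) = pt (px U) (x, t) := congrFun hS1 (x, t)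
  rw [← h3', hE1 x t, hS3, hE2 x t]
  linear_combination (pt U (x, t) + a * px U (x, t)) * hADJ x t
end
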